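/- For γ ∈ ℝ let Λ_γ be the measure on [0,1] with density (1 + log(1/p))^{−γ} with respect to Lebesgue measure, i.e. Λ_γ(dp) = (1 + log(1/p))^{−γ} dp. Then: (a) μ_γ := ∫_{[0,1]} log(1/(1−p)) p^{−2} Λ_γ(dp) < ∞ and σ²_γ := ∫_{[0,1]} (log(1/(1−p)))² p^{−2} Λ_γ(dp) < ∞ if and only if γ > 1; (b) ∫_{[0,1]} log(1/p) p^{−1} Λ_γ(dp) < ∞ if and only if γ > 2; and (c) √(log(1/r)) · ∫_{[0,r]} p^{−1} Λ_γ(dp) → 0 as r → 0 if and only if γ > 3/2. -/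

import Mathlib

open MeasureTheory Filter Set

/-- For `γ ∈ ℝ`, the measure on `[0,1]` with Lebesgue density `(1 + log(1/p))^{-γ}`. -/
noncomputable def LambdaGamma (γ : ℝ) : Measure ℝ :=
  (volume.restrict (Icc (0 : ℝ) 1)).withDensity
    (fun p => ENNReal.ofReal ((1 + Real.log (1 / p)) ^ (-γ)))

/-!
Substituting `p = exp (1 - t)`, i.e. `t = 1 + log (1/p)`, turns `p⁻¹ Λ_γ(dp)` on `[0, r]` into
`t^(-γ) dt` on `(1 + log (1/r), ∞)`. Hence `∫_{[0,r]} p⁻¹ Λ_γ(dp)` is finite iff `γ > 1`, and then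
equals `t₀^(1-γ) / (γ - 1)` with `t₀ = 1 + log (1/r)`, which gives (c) since
`√(t₀ - 1) t₀^(1-γ) → 0` iff `γ > 3/2`. In (b) the integrand becomes `(t - 1) t^(-γ)`.
For (a), `log (1/(1-p))` is comparable to `p` near `0`, so `μ_γ` is comparable to
`∫ p⁻¹ Λ_γ(dp)` there, while near `1` the density is at most `1` and every power of
`log (1/(1-p))` is integrable; the integrand of `σ²_γ` is bounded near `0`.
-/

open scoped ENNReal Topology
open Real

theorem le_log_one_div_one_sub {p : ℝ} (hp : p < 1) : p ≤ log (1 / (1 - p)) := by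
  rw [one_div, log_inv]
  linarith [log_le_sub_one_of_pos (sub_pos.2 hp)]

theorem log_one_div_one_sub_le_two_mul {p : ℝ} (hp0 : 0 ≤ p) (hp : p ≤ 1 / 2) :
    log (1 / (1 - p)) ≤ 2 * p := by
  have h1p : 0 < 1 - p := by linarith
  calc log (1 / (1 - p)) ≤ 1 / (1 - p) - 1 := log_le_sub_one_of_pos (by positivity)
    _ = p / (1 - p) := by field_simp; ring
    _ ≤ 2 * p := by rw [div_le_iff₀ h1p]; nlinarith

theorem log_one_div_pow_le {u : ℝ} (hu0 : 0 < u) (hu1 : u ≤ 1) {n : ℕ} (hn : n ≠ 0) :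
    log (1 / u) ^ n ≤ (2 * n) ^ n * u ^ (-(1 / 2 : ℝ)) := by
  have hn' : (0 : ℝ) < 2 * n := by positivity
  have hlog : log (1 / u) ≤ 2 * n * (1 / u) ^ (2 * n : ℝ)⁻¹ := by
    have := log_le_rpow_div (one_div_pos.2 hu0).le (inv_pos.2 hn')
    rwa [div_inv_eq_mul, mul_comm] at this
  calc log (1 / u) ^ n ≤ (2 * n * (1 / u) ^ (2 * n : ℝ)⁻¹) ^ n :=
        pow_le_pow_left₀ (log_nonneg (one_le_one_div hu0 hu1)) hlog n
    _ = (2 * n) ^ n * (1 / u) ^ ((2 * n : ℝ)⁻¹ * n) := by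
        rw [mul_pow, ← rpow_natCast ((1 / u) ^ _), ← rpow_mul (one_div_pos.2 hu0).le]
    _ = (2 * n) ^ n * u ^ (-(1 / 2 : ℝ)) := by
        rw [show (2 * n : ℝ)⁻¹ * n = 1 / 2 by field_simp, one_div u, inv_rpow hu0.le,
          ← rpow_neg hu0.le]

theorem one_add_log_one_div_pos {r : ℝ} (hr0 : 0 < r) (hr1 : r ≤ 1) : 0 < 1 + log (1 / r) := by
  have := log_nonneg (one_le_one_div hr0 hr1)
  linarith

theorem tendsto_sqrt_mul_one_add_rpow_neg_atTop_iff (a : ℝ) :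
    Tendsto (fun y : ℝ => √y * (1 + y) ^ (-a)) atTop (𝓝 0) ↔ 1 / 2 < a := by
  constructor
  · intro h
    by_contra! ha
    have hlower : ∀ᶠ y in atTop, 1 / 2 ≤ √y * (1 + y) ^ (-a) := by
      filter_upwards [eventually_ge_atTop 1] with y hy
      have hsqrt : √(1 + y) ≤ 2 * √y := by
        rw [sqrt_le_iff, mul_pow, sq_sqrt (by linarith)]
        exact ⟨by positivity, by linarith⟩
      calc 1 / 2 ≤ √y / √(1 + y) := by
            rw [le_div_iff₀ (by positivity)]
            linarith
        _ = √y * (1 + y) ^ (-(1 / 2) : ℝ) := by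
            rw [sqrt_eq_rpow (1 + y), rpow_neg (by linarith), div_eq_mul_inv]
        _ ≤ √y * (1 + y) ^ (-a) := by
            gcongr
            linarith
    linarith [ge_of_tendsto h hlower]
  · intro ha
    have hupper : Tendsto (fun y : ℝ => (1 + y) ^ (-(a - 1 / 2))) atTop (𝓝 0) :=
      (tendsto_rpow_neg_atTop (by linarith)).comp (tendsto_atTop_add_const_left _ 1 tendsto_id)
    refine squeeze_zero' ?_ ?_ hupper
    · filter_upwards [eventually_ge_atTop 0] with y hy
      exact mul_nonneg (sqrt_nonneg y) (rpow_nonneg (by linarith) _)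
    · filter_upwards [eventually_ge_atTop 0] with y hy
      calc √y * (1 + y) ^ (-a) ≤ (1 + y) ^ (1 / 2 : ℝ) * (1 + y) ^ (-a) := by
            rw [← sqrt_eq_rpow]
            gcongr
            linarith
        _ = (1 + y) ^ (-(a - 1 / 2)) := by rw [← rpow_add (by linarith)]; ring_nf

theorem ENNReal.tendsto_ofReal_nhds_zero_iff {α : Type*} {l : Filter α} {f : α → ℝ}
    (hf : ∀ᶠ x in l, 0 ≤ f x) :
    Tendsto (fun x => ENNReal.ofReal (f x)) l (𝓝 0) ↔ Tendsto f l (𝓝 0) := by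
  refine ⟨fun h => ?_, fun h => by simpa using ENNReal.tendsto_ofReal h⟩
  have := (ENNReal.tendsto_toReal ENNReal.zero_ne_top).comp h
  rw [ENNReal.toReal_zero] at this
  exact this.congr' (hf.mono fun x hx => ENNReal.toReal_ofReal hx)

theorem setLIntegral_Ioi_ofReal_rpow_ne_top_iff {s : ℝ} (hs : 0 < s) (a : ℝ) :
    ∫⁻ t in Ioi s, ENNReal.ofReal (t ^ a) ≠ ∞ ↔ a < -1 := by
  rw [lintegral_ofReal_ne_top_iff_integrable (by fun_prop) ((ae_restrict_iff' measurableSet_Ioi).2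
      (ae_of_all _ fun t ht => rpow_nonneg (hs.trans ht).le a)),
    ← IntegrableOn, integrableOn_Ioi_rpow_iff hs]

theorem setLIntegral_Ioi_ofReal_rpow_neg {γ s : ℝ} (hγ : 1 < γ) (hs : 0 < s) :
    ∫⁻ t in Ioi s, ENNReal.ofReal (t ^ (-γ)) = ENNReal.ofReal (s ^ (1 - γ) / (γ - 1)) := by
  rw [← ofReal_integral_eq_lintegral_ofReal (integrableOn_Ioi_rpow_of_lt (by linarith) hs)
      ((ae_restrict_iff' measurableSet_Ioi).2
        (ae_of_all _ fun t ht => rpow_nonneg (hs.trans ht).le _)),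
    integral_Ioi_rpow_of_lt (by linarith) hs, neg_div, ← div_neg, neg_add_eq_sub, neg_sub]

theorem setLIntegral_Ioi_one_rpow_neg_mul_sub_one_ne_top_iff (γ : ℝ) :
    ∫⁻ t in Ioi 1, ENNReal.ofReal (t ^ (-γ)) * ENNReal.ofReal (t - 1) ≠ ∞ ↔ 2 < γ := by
  have hsplit {t : ℝ} (ht : 0 < t) : t ^ (1 - γ) = t * t ^ (-γ) := by
    rw [sub_eq_add_neg, rpow_add ht, rpow_one]
  constructor
  · intro hfin
    by_contra! hγ
    have htop : ∫⁻ t in Ioi 2, ENNReal.ofReal (t ^ (1 - γ)) = ∞ := by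
      by_contra h
      linarith [(setLIntegral_Ioi_ofReal_rpow_ne_top_iff two_pos _).1 h]
    have hdouble : 2 * ∫⁻ t in Ioi 1, ENNReal.ofReal (t ^ (-γ)) * ENNReal.ofReal (t - 1) = ∞ := by
      refine top_unique ?_
      calc ∞ = ∫⁻ t in Ioi 2, ENNReal.ofReal (t ^ (1 - γ)) := htop.symm
        _ ≤ ∫⁻ t in Ioi 2, 2 * (ENNReal.ofReal (t ^ (-γ)) * ENNReal.ofReal (t - 1)) := by
          refine setLIntegral_mono' measurableSet_Ioi fun t (ht : 2 < t) => ?_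
          rw [← ENNReal.ofReal_mul (rpow_nonneg (by linarith) _), ← ENNReal.ofReal_ofNat 2,
            ← ENNReal.ofReal_mul zero_le_two, hsplit (by linarith)]
          have := rpow_nonneg (show (0 : ℝ) ≤ t by linarith) (-γ)
          exact ENNReal.ofReal_le_ofReal (by nlinarith)
        _ = 2 * ∫⁻ t in Ioi 2, ENNReal.ofReal (t ^ (-γ)) * ENNReal.ofReal (t - 1) :=
          lintegral_const_mul _ (by fun_prop)
        _ ≤ _ := by gcongr; norm_num
    exact hfin (by simpa [ENNReal.mul_eq_top] using hdouble)
  · intro hγ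
    refine ne_top_of_le_ne_top ((setLIntegral_Ioi_ofReal_rpow_ne_top_iff one_pos (1 - γ)).2
      (by linarith)) (setLIntegral_mono' measurableSet_Ioi fun t (ht : 1 < t) => ?_)
    rw [← ENNReal.ofReal_mul (rpow_nonneg (by linarith) _), hsplit (by linarith)]
    have := rpow_nonneg (show (0 : ℝ) ≤ t by linarith) (-γ)
    exact ENNReal.ofReal_le_ofReal (by nlinarith)

theorem tendsto_sqrt_mul_setLIntegral_Ioi_one_add_rpow_neg_iff (γ : ℝ) :
    Tendsto (fun y : ℝ => ENNReal.ofReal √y * ∫⁻ t in Ioi (1 + y), ENNReal.ofReal (t ^ (-γ)))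
      atTop (𝓝 0) ↔ 3 / 2 < γ := by
  rcases le_or_gt γ 1 with hγ | hγ
  · refine iff_of_false (fun h => ?_) (by linarith)
    have htop : (fun y : ℝ => ENNReal.ofReal √y * ∫⁻ t in Ioi (1 + y), ENNReal.ofReal (t ^ (-γ)))
        =ᶠ[atTop] fun _ => ∞ := by
      filter_upwards [eventually_gt_atTop 0] with y hy
      have hint : ∫⁻ t in Ioi (1 + y), ENNReal.ofReal (t ^ (-γ)) = ∞ := by
        by_contra hint
        linarith [(setLIntegral_Ioi_ofReal_rpow_ne_top_iff (by linarith) _).1 hint]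
      rw [hint, ENNReal.mul_top (by simpa using hy)]
    exact ENNReal.top_ne_zero (tendsto_nhds_unique (tendsto_const_nhds.congr' htop.symm) h)
  · have heq : (fun y : ℝ => ENNReal.ofReal √y * ∫⁻ t in Ioi (1 + y), ENNReal.ofReal (t ^ (-γ)))
        =ᶠ[atTop] fun y => ENNReal.ofReal (√y * (1 + y) ^ (-(γ - 1)) / (γ - 1)) := by
      filter_upwards [eventually_ge_atTop 0] with y hy
      rw [setLIntegral_Ioi_ofReal_rpow_neg hγ (by linarith), ← ENNReal.ofReal_mul (sqrt_nonneg y),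
        mul_div_assoc, neg_sub]
    have hdiv : Tendsto (fun y : ℝ => √y * (1 + y) ^ (-(γ - 1)) / (γ - 1)) atTop (𝓝 0) ↔
        Tendsto (fun y : ℝ => √y * (1 + y) ^ (-(γ - 1))) atTop (𝓝 0) :=
      ⟨fun h => by simpa [div_mul_cancel₀ _ (sub_ne_zero.2 hγ.ne')] using h.mul_const (γ - 1),
        fun h => by simpa using h.div_const (γ - 1)⟩
    rw [tendsto_congr' heq, ENNReal.tendsto_ofReal_nhds_zero_iff, hdiv,
      tendsto_sqrt_mul_one_add_rpow_neg_atTop_iff]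
    · constructor <;> intro h <;> linarith
    · filter_upwards [eventually_ge_atTop 0] with y hy
      exact div_nonneg (mul_nonneg (sqrt_nonneg y) (rpow_nonneg (by linarith) _)) (by linarith)

theorem integrableOn_one_sub_rpow_neg_half :
    IntegrableOn (fun p : ℝ => (1 - p) ^ (-(1 / 2 : ℝ))) (Icc (1 / 2) 1) := by
  have h := (intervalIntegral.intervalIntegrable_rpow' (a := 0) (b := 1 / 2)
    (r := -(1 / 2)) (by norm_num)).comp_sub_left 1
  norm_num at h
  exact (intervalIntegrable_iff_integrableOn_Icc_of_le (by norm_num)).1 h.symm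

theorem lambdaGamma_absolutelyContinuous (γ : ℝ) : LambdaGamma γ ≪ volume :=
  (withDensity_absolutelyContinuous _ _).trans Measure.restrict_le_self.absolutelyContinuous

theorem lambdaGamma_le_volume {γ : ℝ} (hγ : 0 ≤ γ) : LambdaGamma γ ≤ volume := by
  have hdensity : (fun p => ENNReal.ofReal ((1 + log (1 / p)) ^ (-γ)))
      ≤ᵐ[volume.restrict (Icc 0 1)] 1 := by
    refine (ae_restrict_iff' measurableSet_Icc).2 (ae_of_all _ fun p hp => ?_)
    rw [Pi.one_apply, ENNReal.ofReal_le_one]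
    refine rpow_le_one_of_one_le_of_nonpos ?_ (neg_nonpos.2 hγ)
    rw [one_div, log_inv]
    linarith [log_nonpos hp.1 hp.2]
  calc LambdaGamma γ ≤ (volume.restrict (Icc 0 1)).withDensity 1 := withDensity_mono hdensity
    _ = volume.restrict (Icc 0 1) := withDensity_one
    _ ≤ volume := Measure.restrict_le_self

theorem image_exp_one_sub_Ioi (s : ℝ) :
    (fun t => exp (1 - t)) '' Ioi s = Ioo 0 (exp (1 - s)) := by
  ext p
  constructor
  · rintro ⟨t, ht, rfl⟩
    exact ⟨exp_pos _, exp_lt_exp.2 (by linarith [mem_Ioi.1 ht])⟩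
  · rintro ⟨hp0, hps⟩
    refine ⟨1 - log p, ?_, by simp [exp_log hp0]⟩
    have := (log_lt_log_iff hp0 (exp_pos _)).2 hps
    rw [log_exp] at this
    exact mem_Ioi.2 (by linarith)

theorem lintegral_inv_mul_lambdaGamma_Icc (γ : ℝ) {r : ℝ} (hr0 : 0 < r) (hr1 : r ≤ 1)
    {h : ℝ → ℝ≥0∞} (hh : Measurable h) :
    ∫⁻ p in Icc 0 r, (ENNReal.ofReal p)⁻¹ * h (log (1 / p)) ∂LambdaGamma γ =
      ∫⁻ t in Ioi (1 + log (1 / r)), ENNReal.ofReal (t ^ (-γ)) * h (t - 1) := by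
  have hIoo : Ioo 0 r = (fun t => exp (1 - t)) '' Ioi (1 + log (1 / r)) := by
    rw [image_exp_one_sub_Ioi, one_div, log_inv, sub_add_cancel_left, neg_neg, exp_log hr0]
  have hderiv (t : ℝ) : HasDerivAt (fun t => exp (1 - t)) (-exp (1 - t)) t := by
    simpa using ((hasDerivAt_id t).const_sub 1).exp
  rw [LambdaGamma, setLIntegral_withDensity_eq_setLIntegral_mul _
      (by fun_prop) (by fun_prop) measurableSet_Icc,
    Measure.restrict_restrict measurableSet_Icc,
    inter_eq_self_of_subset_left (Icc_subset_Icc_right hr1),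
    ← setLIntegral_congr Ioo_ae_eq_Icc, hIoo,
    lintegral_image_eq_lintegral_abs_deriv_mul measurableSet_Ioi
      (fun t _ => (hderiv t).hasDerivWithinAt)
      (fun a _ b _ hab => by simpa using exp_injective hab)]
  refine setLIntegral_congr_fun measurableSet_Ioi fun t _ => ?_
  have hlog : log (1 / exp (1 - t)) = t - 1 := by rw [one_div, log_inv, log_exp]; ring
  have hunit : ENNReal.ofReal (exp (1 - t)) * (ENNReal.ofReal (exp (1 - t)))⁻¹ = 1 :=
    ENNReal.mul_inv_cancel (ENNReal.ofReal_pos.2 (exp_pos _)).ne' ENNReal.ofReal_ne_top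
  simp only [Pi.mul_apply, hlog, add_sub_cancel, abs_neg, abs_exp]
  calc ENNReal.ofReal (exp (1 - t)) *
        (ENNReal.ofReal (t ^ (-γ)) * ((ENNReal.ofReal (exp (1 - t)))⁻¹ * h (t - 1)))
      = (ENNReal.ofReal (exp (1 - t)) * (ENNReal.ofReal (exp (1 - t)))⁻¹) *
          (ENNReal.ofReal (t ^ (-γ)) * h (t - 1)) := by ring
    _ = _ := by rw [hunit, one_mul]

theorem lintegral_inv_lambdaGamma_Icc (γ : ℝ) {r : ℝ} (hr0 : 0 < r) (hr1 : r ≤ 1) :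
    ∫⁻ p in Icc 0 r, (ENNReal.ofReal p)⁻¹ ∂LambdaGamma γ =
      ∫⁻ t in Ioi (1 + log (1 / r)), ENNReal.ofReal (t ^ (-γ)) := by
  simpa using lintegral_inv_mul_lambdaGamma_Icc γ hr0 hr1 (h := fun _ => 1) measurable_const

theorem lintegral_inv_lambdaGamma_Icc_ne_top_iff (γ : ℝ) {r : ℝ} (hr0 : 0 < r) (hr1 : r ≤ 1) :
    ∫⁻ p in Icc 0 r, (ENNReal.ofReal p)⁻¹ ∂LambdaGamma γ ≠ ∞ ↔ 1 < γ := by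
  rw [lintegral_inv_lambdaGamma_Icc γ hr0 hr1,
    setLIntegral_Ioi_ofReal_rpow_ne_top_iff (one_add_log_one_div_pos hr0 hr1), neg_lt_neg_iff]

theorem lintegral_log_one_div_one_sub_div_sq_lambdaGamma_eq_top {γ : ℝ} (hγ : γ ≤ 1) :
    ∫⁻ p in Icc (0 : ℝ) 1, ENNReal.ofReal (log (1 / (1 - p)) / p ^ 2) ∂LambdaGamma γ = ∞ := by
  have hinv : ∫⁻ p in Icc (0 : ℝ) 1, (ENNReal.ofReal p)⁻¹ ∂LambdaGamma γ = ∞ := by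
    by_contra h
    linarith [(lintegral_inv_lambdaGamma_Icc_ne_top_iff γ one_pos le_rfl).1 h]
  refine top_unique (hinv.symm.le.trans (setLIntegral_mono_ae (by fun_prop) ?_))
  have hac := (lambdaGamma_absolutelyContinuous γ).ae_le
  filter_upwards [hac (Measure.ae_ne volume 0), hac (Measure.ae_ne volume 1)] with p hp0 hp1 hp
  have hp0 : 0 < p := lt_of_le_of_ne hp.1 (Ne.symm hp0)
  rw [← ENNReal.ofReal_inv_of_pos hp0]
  refine ENNReal.ofReal_le_ofReal ?_
  rw [le_div_iff₀ (by positivity), sq, ← mul_assoc, inv_mul_cancel₀ hp0.ne', one_mul]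
  exact le_log_one_div_one_sub (lt_of_le_of_ne hp.2 hp1)

theorem lintegral_log_one_div_one_sub_pow_div_sq_lambdaGamma_Icc_zero_half_ne_top {γ : ℝ}
    (hγ : 1 < γ) {n : ℕ} (hn : n ≠ 0) :
    ∫⁻ p in Icc (0 : ℝ) (1 / 2), ENNReal.ofReal (log (1 / (1 - p)) ^ n / p ^ 2) ∂LambdaGamma γ
      ≠ ∞ := by
  have hbound : ∀ p ∈ Icc (0 : ℝ) (1 / 2),
      ENNReal.ofReal (log (1 / (1 - p)) ^ n / p ^ 2) ≤ 2 ^ n * (ENNReal.ofReal p)⁻¹ := by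
    rintro p ⟨hp0, hp⟩
    rcases hp0.eq_or_lt with rfl | hp0
    · simp
    rw [← ENNReal.ofReal_inv_of_pos hp0, ← ENNReal.ofReal_ofNat 2, ← ENNReal.ofReal_pow zero_le_two,
      ← ENNReal.ofReal_mul (by positivity)]
    refine ENNReal.ofReal_le_ofReal ?_
    have hlog := le_log_one_div_one_sub (show p < 1 by linarith)
    calc log (1 / (1 - p)) ^ n / p ^ 2
        ≤ (2 * p) ^ n / p ^ 2 := by
          gcongr
          · linarith
          · exact log_one_div_one_sub_le_two_mul hp0.le hp
      _ = 2 ^ n * (p ^ n / p ^ 2) := by ring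
      _ ≤ 2 ^ n * (p / p ^ 2) := by gcongr; exact pow_le_of_le_one hp0.le (by linarith) hn
      _ = 2 ^ n * p⁻¹ := by rw [sq, div_mul_cancel_left₀ hp0.ne']
  refine ne_top_of_le_ne_top ?_ (setLIntegral_mono (by fun_prop) hbound)
  rw [lintegral_const_mul _ (by fun_prop)]
  exact ENNReal.mul_ne_top (by simp)
    ((lintegral_inv_lambdaGamma_Icc_ne_top_iff γ (by norm_num) (by norm_num)).2 hγ)

theorem lintegral_log_one_div_one_sub_pow_div_sq_lambdaGamma_Icc_half_one_ne_top {γ : ℝ}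
    (hγ : 0 ≤ γ) {n : ℕ} (hn : n ≠ 0) :
    ∫⁻ p in Icc (1 / 2 : ℝ) 1, ENNReal.ofReal (log (1 / (1 - p)) ^ n / p ^ 2) ∂LambdaGamma γ
      ≠ ∞ := by
  have hbound : ∀ p ∈ Icc (1 / 2 : ℝ) 1, ENNReal.ofReal (log (1 / (1 - p)) ^ n / p ^ 2) ≤
      ENNReal.ofReal (4 * (2 * n) ^ n * (1 - p) ^ (-(1 / 2 : ℝ))) := by
    rintro p ⟨hp, hp1⟩
    rcases hp1.eq_or_lt with rfl | hp1
    · simp [zero_pow hn]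
    refine ENNReal.ofReal_le_ofReal ?_
    have hlog := log_one_div_pow_le (sub_pos.2 hp1) (by linarith) hn
    rw [div_le_iff₀ (by positivity)]
    calc log (1 / (1 - p)) ^ n ≤ (2 * n) ^ n * (1 - p) ^ (-(1 / 2 : ℝ)) := hlog
      _ ≤ (2 * n) ^ n * (1 - p) ^ (-(1 / 2 : ℝ)) * (4 * p ^ 2) :=
        le_mul_of_one_le_right (by positivity) (by nlinarith)
      _ = _ := by ring
  refine ne_top_of_le_ne_top ?_ ((lintegral_mono' (Measure.restrict_mono le_rfl
    (lambdaGamma_le_volume hγ)) le_rfl).trans (setLIntegral_mono (by fun_prop) hbound))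
  exact ((integrableOn_one_sub_rpow_neg_half.const_mul _).lintegral_lt_top).ne

theorem lintegral_log_one_div_one_sub_pow_div_sq_lambdaGamma_ne_top {γ : ℝ} (hγ : 1 < γ)
    {n : ℕ} (hn : n ≠ 0) :
    ∫⁻ p in Icc (0 : ℝ) 1, ENNReal.ofReal (log (1 / (1 - p)) ^ n / p ^ 2) ∂LambdaGamma γ ≠ ∞ := by
  rw [← Icc_union_Icc_eq_Icc (by norm_num : (0 : ℝ) ≤ 1 / 2) (by norm_num : (1 / 2 : ℝ) ≤ 1)]
  exact ne_top_of_le_ne_top (ENNReal.add_ne_top.2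
    ⟨lintegral_log_one_div_one_sub_pow_div_sq_lambdaGamma_Icc_zero_half_ne_top hγ hn,
      lintegral_log_one_div_one_sub_pow_div_sq_lambdaGamma_Icc_half_one_ne_top (by linarith) hn⟩)
    (lintegral_union_le _ _ _)

theorem lintegral_log_one_div_div_lambdaGamma_ne_top_iff (γ : ℝ) :
    ∫⁻ p in Icc (0 : ℝ) 1, ENNReal.ofReal (log (1 / p) / p) ∂LambdaGamma γ ≠ ∞ ↔ 2 < γ := by
  have hcongr : ∫⁻ p in Icc (0 : ℝ) 1, ENNReal.ofReal (log (1 / p) / p) ∂LambdaGamma γ =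
      ∫⁻ p in Icc (0 : ℝ) 1, (ENNReal.ofReal p)⁻¹ * ENNReal.ofReal (log (1 / p))
        ∂LambdaGamma γ := by
    refine setLIntegral_congr_fun measurableSet_Icc fun p hp => ?_
    rcases hp.1.eq_or_lt with rfl | hp0
    · simp
    · rw [ENNReal.ofReal_div_of_pos hp0, div_eq_mul_inv, mul_comm]
  rw [hcongr, lintegral_inv_mul_lambdaGamma_Icc γ one_pos le_rfl ENNReal.measurable_ofReal,
    div_one, log_one, add_zero]
  exact setLIntegral_Ioi_one_rpow_neg_mul_sub_one_ne_top_iff γ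

theorem tendsto_sqrt_log_mul_lintegral_inv_lambdaGamma_Icc_iff (γ : ℝ) :
    Tendsto (fun r : ℝ => ENNReal.ofReal √(log (1 / r)) *
        ∫⁻ p in Icc (0 : ℝ) r, (ENNReal.ofReal p)⁻¹ ∂LambdaGamma γ) (𝓝[>] 0) (𝓝 0) ↔
      3 / 2 < γ := by
  rw [← map_exp_atBot, tendsto_map'_iff, ← tendsto_comp_neg_atTop_iff,
    ← tendsto_sqrt_mul_setLIntegral_Ioi_one_add_rpow_neg_iff]
  refine tendsto_congr' ?_
  filter_upwards [eventually_ge_atTop 0] with y hy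
  rw [Function.comp_apply, lintegral_inv_lambdaGamma_Icc γ (exp_pos _)
    (exp_le_one_iff.2 (by linarith)), one_div, log_inv, log_exp, neg_neg]

/-- For the family `Λ_γ(dp) = (1 + log(1/p))^{-γ} dp` on `[0,1]`:
(a) `μ_γ := ∫ log(1/(1-p)) p⁻² Λ_γ(dp) < ∞` and
`σ²_γ := ∫ (log(1/(1-p)))² p⁻² Λ_γ(dp) < ∞` iff `γ > 1`;
(b) `∫ log(1/p) p⁻¹ Λ_γ(dp) < ∞` iff `γ > 2`;
(c) `√(log(1/r)) ∫_{[0,r]} p⁻¹ Λ_γ(dp) → 0` as `r → 0` iff `γ > 3/2`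
(stated in `ℝ≥0∞` so that an infinite dust integral is faithfully recorded). -/
theorem lambdaGamma_example (γ : ℝ) :
    (((∫⁻ p in Icc (0 : ℝ) 1,
          ENNReal.ofReal (Real.log (1 / (1 - p)) / p ^ 2) ∂(LambdaGamma γ)) ≠ ⊤ ∧
        (∫⁻ p in Icc (0 : ℝ) 1,
          ENNReal.ofReal ((Real.log (1 / (1 - p))) ^ 2 / p ^ 2) ∂(LambdaGamma γ)) ≠ ⊤) ↔
      1 < γ) ∧
    ((∫⁻ p in Icc (0 : ℝ) 1,
        ENNReal.ofReal (Real.log (1 / p) / p) ∂(LambdaGamma γ)) ≠ ⊤ ↔ 2 < γ) ∧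
    (Tendsto
        (fun r : ℝ =>
          ENNReal.ofReal (Real.sqrt (Real.log (1 / r))) *
            ∫⁻ p in Icc (0 : ℝ) r, (ENNReal.ofReal p)⁻¹ ∂(LambdaGamma γ))
        (nhdsWithin 0 (Ioi 0)) (nhds 0) ↔ 3 / 2 < γ) := by
  refine ⟨⟨fun ⟨hμ, _⟩ => ?_, fun hγ => ⟨?_, ?_⟩⟩,
    lintegral_log_one_div_div_lambdaGamma_ne_top_iff γ,
    tendsto_sqrt_log_mul_lintegral_inv_lambdaGamma_Icc_iff γ⟩
  · by_contra! hγ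
    exact hμ (lintegral_log_one_div_one_sub_div_sq_lambdaGamma_eq_top hγ)
  · simpa using lintegral_log_one_div_one_sub_pow_div_sq_lambdaGamma_ne_top hγ one_ne_zero
  · exact lintegral_log_one_div_one_sub_pow_div_sq_lambdaGamma_ne_top hγ two_ne_zero
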